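/- Let R be a local Noetherian domain, J an integrally closed m-primary ideal of R, u an element of the socle of J (i.e., (J : u) = m, u ∉ J), and I = (J, u). If M is a finitely generated torsion-free R-module, then λ(IM/JM) ≥ rank(M). -/

import Mathlib

open IsLocalRing

/-- The length of an `R`-module, as a natural number. -/
noncomputable def len (R M : Type*) [Ring R] [AddCommGroup M] [Module R M] : ℕ :=
  ((Order.krullDim (Submodule R M)).unbotD 0).toNat

/-- `I` is `m`-primary: a proper ideal containing a power of the maximal ideal. -/
def IsMPrimary {R : Type*} [CommRing R] [IsLocalRing R] (I : Ideal R) : Prop :=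
  I ≠ ⊤ ∧ ∃ n : ℕ, maximalIdeal R ^ n ≤ I

/-- `x` is integral over the ideal `J`: it satisfies an equation
`x^n + a₁ x^{n-1} + ⋯ + aₙ = 0` with `aᵢ ∈ Jⁱ`. -/
def IsIntegralOverIdeal {R : Type*} [CommRing R] (J : Ideal R) (x : R) : Prop :=
  ∃ n : ℕ, 0 < n ∧ ∃ a : ℕ → R, (∀ i, 1 ≤ i → i ≤ n → a i ∈ J ^ i) ∧
    x ^ n + ∑ i ∈ Finset.Icc 1 n, a i * x ^ (n - i) = 0

/-- `J` is integrally closed: every element integral over `J` lies in `J`. -/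
def IsIntegrallyClosedIdeal {R : Type*} [CommRing R] (J : Ideal R) : Prop :=
  ∀ x : R, IsIntegralOverIdeal J x → x ∈ J

/-- The generic rank of a module over a domain: `dim_{Frac R} (M ⊗_R Frac R)`. -/
noncomputable def genericRank (R : Type*) [CommRing R] [IsDomain R]
    (M : Type*) [AddCommGroup M] [Module R M] : ℕ :=
  Module.finrank (FractionRing R) (LocalizedModule (nonZeroDivisors R) M)


/-!
Since `𝔪 I ⊆ J`, the module `IM/JM` is a vector space over `R/𝔪`, so it is spanned by
`λ(IM/JM)` elements `s`, and `uM ⊆ JM + Rs`. In `K`, the ideal of `R[J/u]` generated by `J/u` is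
proper: writing `1` as an element of it gives `u^(N+1) ∈ J (J, u)^N`, an equation of integral
dependence of `u` over `J`. Localizing `R[J/u]` at a maximal ideal containing it gives a local ring
`T ⊆ K` with `J ⊆ u 𝔪_T`, so `TM ⊆ T (s/u) + 𝔪_T TM` inside `M ⊗ K`. By Nakayama the `s/u` span
`TM`, hence `M ⊗ K`.
-/

section IntegralDependence

variable {R : Type*} [CommRing R]

theorem mul_sup_span_singleton_pow_le (J : Ideal R) (u : R) (N : ℕ) :
    J * (J ⊔ Ideal.span {u}) ^ N ≤
      ⨆ k ∈ Finset.range (N + 1), J ^ (N + 1 - k) * Ideal.span {u} ^ k := by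
  induction N with
  | zero => exact le_iSup₂_of_le 0 (by simp) (by simp)
  | succ N ih =>
    calc J * (J ⊔ Ideal.span {u}) ^ (N + 1)
        = J * (J ⊔ Ideal.span {u}) ^ N * (J ⊔ Ideal.span {u}) := by rw [pow_succ, mul_assoc]
      _ ≤ (⨆ k ∈ Finset.range (N + 1), J ^ (N + 1 - k) * Ideal.span {u} ^ k) *
            (J ⊔ Ideal.span {u}) := Ideal.mul_mono_left ih
      _ ≤ _ := by
        simp only [Ideal.iSup_mul, Ideal.mul_sup]
        refine sup_le (iSup₂_le fun k hk => ?_) (iSup₂_le fun k hk => ?_) <;>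
          rw [Finset.mem_range] at hk
        · refine le_iSup₂_of_le k (Finset.mem_range.mpr (by omega)) (le_of_eq ?_)
          rw [mul_right_comm, ← pow_succ, show N + 1 - k + 1 = N + 1 + 1 - k by omega]
        · refine le_iSup₂_of_le (k + 1) (Finset.mem_range.mpr (by omega)) (le_of_eq ?_)
          rw [mul_assoc, ← pow_succ, show N + 1 + 1 - (k + 1) = N + 1 - k by omega]

theorem isIntegralOverIdeal_of_pow_mem {J : Ideal R} {u : R} {N : ℕ}
    (hu : u ^ (N + 1) ∈ J * (J ⊔ Ideal.span {u}) ^ N) : IsIntegralOverIdeal J u := by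
  have hmem := mul_sup_span_singleton_pow_le J u N hu
  obtain ⟨μ, hμ⟩ := (Submodule.mem_iSup_finset_iff_exists_sum _ _).mp hmem
  have hcoeff : ∀ k, ∃ b ∈ J ^ (N + 1 - k), b * u ^ k = μ k := fun k =>
    Ideal.mem_mul_span_singleton.mp (by simpa [Ideal.span_singleton_pow] using (μ k).2)
  choose b hbJ hb using hcoeff
  refine ⟨N + 1, N.succ_pos, fun i => -b (N + 1 - i), fun i hi1 hiN => ?_, ?_⟩
  · simpa [show N + 1 - (N + 1 - i) = i by omega] using hbJ (N + 1 - i)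
  · have hreflect : ∑ i ∈ Finset.Icc 1 (N + 1), -b (N + 1 - i) * u ^ (N + 1 - i) =
        -∑ k ∈ Finset.range (N + 1), b k * u ^ k := by
      rw [← Finset.sum_neg_distrib]
      refine Finset.sum_nbij' (fun i => N + 1 - i) (fun k => N + 1 - k) ?_ ?_ ?_ ?_ ?_ <;>
        intro i hi <;> simp only [Finset.mem_Icc, Finset.mem_range] at hi ⊢ <;> first | omega | ring
    simp only [hreflect, hb, hμ, add_neg_cancel]

end IntegralDependence

section DominatingLocalRing

variable {R K : Type*} [CommRing R] [Field K] [Algebra R K]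

def MemDivPow (𝔞 I : Ideal R) (u : R) (t : K) : Prop :=
  ∃ N : ℕ, ∃ r ∈ 𝔞 * I ^ N, algebraMap R K r = algebraMap R K u ^ (N + 1) * t

variable {𝔞 I : Ideal R} {u : R}

theorem memDivPow_zero : MemDivPow 𝔞 I u (0 : K) :=
  ⟨0, 0, zero_mem _, by simp⟩

theorem MemDivPow.add (hu : u ∈ I) {s t : K} (hs : MemDivPow 𝔞 I u s) (ht : MemDivPow 𝔞 I u t) :
    MemDivPow 𝔞 I u (s + t) := by
  obtain ⟨M, a, ha, has⟩ := hs
  obtain ⟨N, b, hb, hbt⟩ := ht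
  have hmul : ∀ {k l : ℕ} {c : R}, c ∈ 𝔞 * I ^ k → u ^ l * c ∈ 𝔞 * I ^ (l + k) := by
    intro k l c hc
    rw [pow_add, mul_left_comm]
    exact Ideal.mul_mem_mul (Ideal.pow_mem_pow hu l) hc
  refine ⟨M + N, u ^ N * a + u ^ M * b, add_mem ?_ ?_, ?_⟩
  · simpa [add_comm] using hmul ha
  · exact hmul hb
  · simp only [map_add, map_mul, map_pow, has, hbt]
    ring

theorem MemDivPow.mul {s t : K} (hs : MemDivPow I I u s) (ht : MemDivPow 𝔞 I u t) :
    MemDivPow 𝔞 I u (s * t) := by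
  obtain ⟨M, a, ha, has⟩ := hs
  obtain ⟨N, b, hb, hbt⟩ := ht
  refine ⟨M + N + 1, a * b, ?_, ?_⟩
  · have hab := Ideal.mul_mem_mul ha hb
    rwa [← pow_succ', mul_left_comm, ← pow_add, add_right_comm] at hab
  · simp only [map_mul, has, hbt]
    ring

theorem memDivPow_algebraMap (hu : u ∈ I) (r : R) : MemDivPow I I u (algebraMap R K r) :=
  ⟨0, u * r, by simpa using Ideal.mul_mem_right r I hu, by simp⟩

theorem memDivPow_div (hu : algebraMap R K u ≠ 0) {j : R} (hj : j ∈ 𝔞) :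
    MemDivPow 𝔞 I u (algebraMap R K j / algebraMap R K u) :=
  ⟨0, j, by simpa using hj, by field_simp; ring⟩

theorem MemDivPow.mono {𝔟 : Ideal R} (h : 𝔞 ≤ 𝔟) {t : K} (ht : MemDivPow 𝔞 I u t) :
    MemDivPow 𝔟 I u t :=
  let ⟨N, r, hr, hrt⟩ := ht
  ⟨N, r, Ideal.mul_mono_left h hr, hrt⟩

variable (K) in
def divSet (J : Ideal R) (u : R) : Set K :=
  (fun j => algebraMap R K j / algebraMap R K u) '' J

theorem memDivPow_of_mem_adjoin {J : Ideal R} (hJI : J ≤ I) (huI : u ∈ I)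
    (hu : algebraMap R K u ≠ 0) {t : K} (ht : t ∈ Algebra.adjoin R (divSet K J u)) :
    MemDivPow I I u t := by
  induction ht using Algebra.adjoin_induction with
  | mem t ht =>
    obtain ⟨j, hj, rfl⟩ := ht
    exact (memDivPow_div hu hj).mono hJI
  | algebraMap r => exact memDivPow_algebraMap huI r
  | add s t _ _ hs ht => exact hs.add huI ht
  | mul s t _ _ hs ht => exact hs.mul ht

theorem memDivPow_of_mem_span {J : Ideal R} (hJI : J ≤ I) (huI : u ∈ I)
    (hu : algebraMap R K u ≠ 0) {a : (Algebra.adjoin R (divSet K J u)).toSubring}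
    (ha : a ∈ Ideal.span {a : (Algebra.adjoin R (divSet K J u)).toSubring | ↑a ∈ divSet K J u}) :
    MemDivPow J I u (a : K) := by
  induction ha using Submodule.span_induction with
  | mem a ha =>
    obtain ⟨j, hj, hja⟩ := ha
    exact hja ▸ memDivPow_div hu hj
  | zero => exact memDivPow_zero
  | add a b _ _ ha hb => exact ha.add huI hb
  | smul s a _ ha => exact (memDivPow_of_mem_adjoin hJI huI hu s.2).mul ha

theorem exists_isLocalRing_subalgebra_mul_mem_maximalIdeal [FaithfulSMul R K] {J : Ideal R}
    (hJ : IsIntegrallyClosedIdeal J) (huJ : u ∉ J) :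
    ∃ (T : Subalgebra R K) (_ : IsLocalRing T),
      ∀ j ∈ J, ∃ a ∈ maximalIdeal T, (a : K) * algebraMap R K u = algebraMap R K j := by
  have hinj := FaithfulSMul.algebraMap_injective R K
  have hu : algebraMap R K u ≠ 0 :=
    (map_ne_zero_iff _ hinj).mpr fun h => huJ (h ▸ J.zero_mem)
  have hJI : J ≤ J ⊔ Ideal.span {u} := le_sup_left
  have huI : u ∈ J ⊔ Ideal.span {u} := Ideal.mem_sup_right (Ideal.mem_span_singleton_self u)
  set S := (Algebra.adjoin R (divSet K J u)).toSubring
  set A : Ideal S := Ideal.span {a | (a : K) ∈ divSet K J u}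
  have hA : A ≠ ⊤ := by
    intro htop
    obtain ⟨N, r, hr, hru⟩ := memDivPow_of_mem_span hJI huI hu (htop ▸ Submodule.mem_top : 1 ∈ A)
    have hr_eq : r = u ^ (N + 1) := hinj (by simpa using hru)
    exact huJ (hJ u (isIntegralOverIdeal_of_pow_mem (hr_eq ▸ hr)))
  obtain ⟨n, hn, hAn⟩ := Ideal.exists_le_maximal A hA
  let T := LocalSubring.ofPrime S n
  refine ⟨{ T.toSubring with
    algebraMap_mem' := fun r => LocalSubring.le_ofPrime S n (Subalgebra.algebraMap_mem _ r) },
    T.isLocalRing, fun j hj => ?_⟩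
  let b : S := ⟨algebraMap R K j / algebraMap R K u, Algebra.subset_adjoin ⟨j, hj, rfl⟩⟩
  have hb : algebraMap S T.toSubring b ∈ maximalIdeal T.toSubring :=
    (IsLocalization.AtPrime.to_map_mem_maximal_iff _ n b).mpr
      (hAn (Ideal.subset_span ⟨j, hj, rfl⟩))
  refine ⟨_, hb, ?_⟩
  show algebraMap R K j / algebraMap R K u * algebraMap R K u = algebraMap R K j
  field_simp

end DominatingLocalRing

section Nakayama

open Submodule Module

theorem finrank_le_card_of_le_span_sup_smul {T K V : Type*} [CommRing T] [IsLocalRing T]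
    [Field K] [Algebra T K] [AddCommGroup V] [Module K V] [Module T V] [IsScalarTower T K V]
    {N : Submodule T V} (hN : N.FG) (hNK : span K (N : Set V) = ⊤) {s : Finset V}
    (h : N ≤ span T s ⊔ maximalIdeal T • N) : finrank K V ≤ s.card := by
  have hNs : N ≤ span T s := le_of_le_smul_of_le_jacobson_bot hN
    (IsLocalRing.jacobson_eq_maximalIdeal ⊥ bot_ne_top).ge h
  have hs : span K (s : Set V) = ⊤ :=
    top_unique (hNK ▸ span_le.mpr fun v hv => span_le_restrictScalars T K _ (hNs hv))
  calc finrank K V = finrank K (span K (s : Set V)) := by rw [hs, finrank_top]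
    _ ≤ s.card := finrank_span_finset_le_card s

variable {R V M : Type*} [CommRing R] [AddCommGroup V] [Module R V] [AddCommGroup M] [Module R M]

theorem span_range_fg_of_finite (S : Type*) [CommRing S] [Algebra R S] [Module S V]
    [IsScalarTower R S V] [Module.Finite R M] (ι : M →ₗ[R] V) : (span S (Set.range ι)).FG := by
  classical
  obtain ⟨t, ht⟩ := Module.Finite.fg_top (R := R) (M := M)
  refine ⟨t.image ι, ?_⟩
  rw [Finset.coe_image, ← span_span_of_tower R, ← map_span, ht, Submodule.map_top,
    LinearMap.coe_range]

variable {K : Type*} [Field K] [Algebra R K] [Module K V] [IsScalarTower R K V]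

theorem finrank_le_card_of_smul_mem_smul_sup_span (T : Subalgebra R K) [IsLocalRing T]
    {J : Ideal R} {u : R} (hu : algebraMap R K u ≠ 0)
    (hJT : ∀ j ∈ J, ∃ a ∈ maximalIdeal T, (a : K) * algebraMap R K u = algebraMap R K j)
    [Module.Finite R M] (ι : M →ₗ[R] V) (hι : span K (Set.range ι) = ⊤) {s : Finset M}
    (hs : ∀ x : M, u • x ∈ J • (⊤ : Submodule R M) ⊔ span R (s : Set M)) :
    finrank K V ≤ s.card := by
  classical
  set N := span T (Set.range ι)
  let f : M →ₗ[R] V := (algebraMap R K u)⁻¹ • ι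
  have hJN : ∀ y ∈ J • (⊤ : Submodule R M), f y ∈ maximalIdeal T • N := by
    intro y hy
    refine Submodule.smul_induction_on hy (fun j hj m _ => ?_) fun y z hy hz => ?_
    · obtain ⟨a, ha, hau⟩ := hJT j hj
      have hfa : f (j • m) = a • ι m := by
        rw [LinearMap.smul_apply, map_smul, ← algebraMap_smul K j, ← hau, mul_comm, mul_smul,
          inv_smul_smul₀ hu, Subalgebra.smul_def]
      exact hfa ▸ smul_mem_smul ha (subset_span ⟨m, rfl⟩)
    · exact map_add f y z ▸ add_mem hy hz
  have hsN : ∀ z ∈ span R (s : Set M), f z ∈ span T ((s.image f : Finset V) : Set V) := by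
    intro z hz
    rw [Finset.coe_image]
    exact span_le_restrictScalars R T _ (map_span f _ ▸ mem_map_of_mem hz)
  have hN : N ≤ span T ((s.image f : Finset V) : Set V) ⊔ maximalIdeal T • N := by
    refine span_le.mpr ?_
    rintro _ ⟨x, rfl⟩
    obtain ⟨y, hy, z, hz, hyz⟩ := mem_sup.mp (hs x)
    have hx : ι x = f y + f z := by
      simp only [f, LinearMap.smul_apply, ← smul_add, ← map_add, hyz, map_smul,
        ← algebraMap_smul K u, inv_smul_smul₀ hu]
    rw [hx, add_comm]
    exact add_mem (mem_sup_left (hsN z hz)) (mem_sup_right (hJN y hy))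
  have hNK : span K (N : Set V) = ⊤ := by rw [span_span_of_tower, hι]
  exact (finrank_le_card_of_le_span_sup_smul (span_range_fg_of_finite T ι) hNK hN).trans
    Finset.card_image_le

end Nakayama

section Length

open Submodule

theorem len_eq_toNat_length (R M : Type*) [Ring R] [AddCommGroup M] [Module R M] :
    len R M = (Module.length R M).toNat := by
  rw [len, ← Module.coe_length, WithBot.unbotD_coe]

variable {R : Type*} [CommRing R] [IsLocalRing R]

theorem exists_span_eq_top_card_le_len {Q : Type*} [AddCommGroup Q] [Module R Q]
    [Module.Finite R Q] (hQ : Module.IsTorsionBySet R Q (maximalIdeal R)) :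
    ∃ s : Finset Q, span R (s : Set Q) = ⊤ ∧ s.card ≤ len R Q := by
  classical
  let _ := Ideal.Quotient.field (maximalIdeal R)
  let _ := hQ.module
  have : Module.Finite (R ⧸ maximalIdeal R) Q :=
    Module.Finite.of_restrictScalars_finite R _ Q
  let b := Module.finBasis (R ⧸ maximalIdeal R) Q
  refine ⟨Finset.univ.image b, ?_, ?_⟩
  · rw [Finset.coe_image, Finset.coe_univ, Set.image_univ,
      ← restrictScalars_span R (R ⧸ maximalIdeal R) Ideal.Quotient.mk_surjective, b.span_eq,
      restrictScalars_top]
  · rw [len_eq_toNat_length, Module.length_eq_of_surjective (S := R)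
      (R := R ⧸ maximalIdeal R) Ideal.Quotient.mk_surjective,
      Module.length_eq_finrank, ENat.toNat_natCast]
    exact Finset.card_image_le.trans (by simp)

theorem exists_le_sup_span_card_le_len {M : Type*} [AddCommGroup M] [Module R M]
    {N P : Submodule R M} [Module.Finite R N] (hNP : maximalIdeal R • N ≤ P) :
    ∃ s : Finset M, N ≤ P ⊔ span R (s : Set M) ∧ s.card ≤ len R (N ⧸ P.comap N.subtype) := by
  classical
  set P' := P.comap N.subtype
  have hQ : Module.IsTorsionBySet R (N ⧸ P') (maximalIdeal R) := by
    rintro q ⟨c, hc⟩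
    obtain ⟨x, rfl⟩ := P'.mkQ_surjective q
    rw [← map_smul, mkQ_apply, Quotient.mk_eq_zero]
    exact hNP (smul_mem_smul hc x.2)
  obtain ⟨t, ht, htcard⟩ := exists_span_eq_top_card_le_len hQ
  let lift := Function.surjInv P'.mkQ_surjective
  refine ⟨t.image fun q => (lift q : M), fun x hx => ?_, Finset.card_image_le.trans htcard⟩
  have hlift : P' ⊔ span R (lift '' t) = ⊤ := by
    have hid : P'.mkQ ∘ lift = id := funext (Function.surjInv_eq P'.mkQ_surjective)
    rw [← comap_map_mkQ, map_span, ← Set.image_comp, hid, Set.image_id, ht, comap_top]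
  have hx' : N.subtype ⟨x, hx⟩ ∈ (P' ⊔ span R (lift '' t)).map N.subtype :=
    mem_map_of_mem (hlift ▸ mem_top)
  rw [Submodule.map_sup, map_span, Set.image_image] at hx'
  simpa using sup_le_sup_right (map_comap_le N.subtype P) _ hx'

end Length

theorem rank_le_length_smul_quotient_general
    (R : Type*) [CommRing R] [IsLocalRing R] [IsNoetherianRing R] [IsDomain R]
    (J : Ideal R) (hJic : IsIntegrallyClosedIdeal J)
    (u : R) (huJ : u ∉ J) (husoc : Submodule.colon J (Ideal.span {u}) = maximalIdeal R)
    (I : Ideal R) (hI : I = J ⊔ Ideal.span {u})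
    (M : Type*) [AddCommGroup M] [Module R M] [Module.Finite R M] :
    genericRank R M ≤
      len R (↥(I • (⊤ : Submodule R M)) ⧸
        Submodule.comap (I • (⊤ : Submodule R M)).subtype (J • (⊤ : Submodule R M))) := by
  have hmI : maximalIdeal R * I ≤ J := by
    rw [hI, Ideal.mul_sup]
    exact sup_le Ideal.mul_le_right
      (Ideal.mul_le.mpr fun c hc x hx => Submodule.mem_colon.mp (husoc ▸ hc) x hx)
  obtain ⟨s, hIs, hcard⟩ := exists_le_sup_span_card_le_len (N := I • (⊤ : Submodule R M))
    (P := J • ⊤) (by rw [← Submodule.mul_smul]; exact Submodule.smul_mono_left hmI)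
  have huM : ∀ x : M, u • x ∈ J • (⊤ : Submodule R M) ⊔ Submodule.span R (s : Set M) := fun x =>
    hIs (Submodule.smul_mem_smul (hI ▸ Ideal.mem_sup_right (Ideal.mem_span_singleton_self u))
      Submodule.mem_top)
  obtain ⟨T, _, hJT⟩ :=
    exists_isLocalRing_subalgebra_mul_mem_maximalIdeal (K := FractionRing R) hJic huJ
  have hu : algebraMap R (FractionRing R) u ≠ 0 :=
    (map_ne_zero_iff _ (IsFractionRing.injective R _)).mpr fun h => huJ (h ▸ J.zero_mem)
  have hspan := span_eq_top_of_isLocalizedModule (FractionRing R) (nonZeroDivisors R)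
    (LocalizedModule.mkLinearMap (nonZeroDivisors R) M) Submodule.span_univ
  rw [Set.image_univ] at hspan
  exact (finrank_le_card_of_smul_mem_smul_sup_span T hu hJT _ hspan huM).trans hcard

theorem rank_le_length_smul_quotient
    (R : Type*) [CommRing R] [IsLocalRing R] [IsNoetherianRing R] [IsDomain R]
    (J : Ideal R) (hJprim : IsMPrimary J) (hJic : IsIntegrallyClosedIdeal J)
    (u : R) (huJ : u ∉ J) (husoc : Submodule.colon J (Ideal.span {u}) = maximalIdeal R)
    (I : Ideal R) (hI : I = J ⊔ Ideal.span {u})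
    (M : Type*) [AddCommGroup M] [Module R M] [Module.Finite R M]
    [NoZeroSMulDivisors R M] :
    genericRank R M ≤
      len R (↥(I • (⊤ : Submodule R M)) ⧸
        Submodule.comap (I • (⊤ : Submodule R M)).subtype (J • (⊤ : Submodule R M))) :=
  rank_le_length_smul_quotient_general R J hJic u huJ husoc I hI M
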